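/- arXiv:1507.07697 — 2 statements merged into one kernel-verified Lean document; each statement's English description precedes it below -/
import Mathlib

section
/- Sequential composition of mutators is monotonic with respect to coverage: if C₁ ⇛ C₁' and C₂ ⇛ C₂' then C₁; C₂ ⇛ C₁'; C₂' (for answer-free mutators). -/
/- ## Outcomes, satisfaction, coverage, sequential composition -/

/-- An outcome over state space `S` with answers in `A`: a singleton, a demonic
choice over a family of outcomes, or an angelic choice over a family of outcomes. -/
inductive Outcome (S : Type) (A : Type) : Type 1 where
  | single (σ : S) (a : A)
  | demonic (I : Type) (f : I → Outcome S A)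
  | angelic (I : Type) (f : I → Outcome S A)

namespace Outcome

/-- Satisfaction of a postcondition by an outcome. -/
def sat {S A : Type} : Outcome S A → (S → A → Prop) → Prop
  | single σ a, Q => Q σ a
  | demonic _ f, Q => ∀ i, (f i).sat Q
  | angelic _ f, Q => ∃ i, (f i).sat Q

/-- Coverage of outcomes: `φ` covers `φ'` iff every postcondition satisfied by `φ`
is satisfied by `φ'`. -/
def cover {S A : Type} (φ φ' : Outcome S A) : Prop :=
  ∀ Q : S → A → Prop, φ.sat Q → φ'.sat Q

/-- Sequential composition (with answers) of an outcome with an answer-indexed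
family of mutators. -/
def bind {S A S' B : Type} : Outcome S A → (A → S → Outcome S' B) → Outcome S' B
  | single σ a, C => C a σ
  | demonic I f, C => demonic I (fun i => (f i).bind C)
  | angelic I f, C => angelic I (fun i => (f i).bind C)

end Outcome

/-- Failure: the angelic choice over zero alternatives. -/
def failO {S A : Type} : Outcome S A := .angelic PEmpty (fun x => x.elim)
/-- Nontermination: the demonic choice over zero alternatives. -/
def blockO {S A : Type} : Outcome S A := .demonic PEmpty (fun x => x.elim)
/-- Angelic guard: `⨁ P. φ`. -/
def aguard {S A : Type} (P : Prop) (φ : Outcome S A) : Outcome S A :=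
  .angelic (PLift P) (fun _ => φ)
/-- Demonic guard: `⨂ P. φ`. -/
def dguard {S A : Type} (P : Prop) (φ : Outcome S A) : Outcome S A :=
  .demonic (PLift P) (fun _ => φ)
/-- Binary demonic choice of outcomes. -/
def dchoiceO {S A : Type} (φ₁ φ₂ : Outcome S A) : Outcome S A :=
  .demonic Bool (fun t => if t then φ₁ else φ₂)

/-- Sequential composition of an answer-free outcome with a mutator: `φ; C`. -/
def oseq {S S' : Type} (φ : Outcome S Unit) (C : S → Outcome S' Unit) : Outcome S' Unit :=
  φ.bind (fun _ => C)

/-- Sequential composition of mutators with answers: `x ← C; C'(x)`. -/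
def mbind {S S' S'' A B : Type} (C : S → Outcome S' A) (C' : A → S' → Outcome S'' B) :
    S → Outcome S'' B :=
  fun σ => (C σ).bind C'

/-- Sequential composition `C; C'` where the first mutator is answer-free. -/
def mthen {S S' S'' A : Type} (C : S → Outcome S' Unit) (C' : S' → Outcome S'' A) :
    S → Outcome S'' A :=
  fun σ => (C σ).bind (fun _ => C')

/-- Side-effect-only sequential composition `C ;, C'`: run `C`, then `C'`, and keep
`C`'s answer. -/
def msideSeq {S S' S'' A : Type} (C : S → Outcome S' A) (C' : S' → Outcome S'' Unit) :
    S → Outcome S'' A :=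
  fun σ => (C σ).bind (fun a σ' => (C' σ').bind (fun _ σ'' => .single σ'' a))

/-- Coverage of mutators, lifted pointwise from coverage of outcomes. -/
def mcover {S S' A : Type} (C C' : S → Outcome S' A) : Prop :=
  ∀ σ, (C σ).cover (C' σ)

/-- Binary demonic choice of mutators. -/
def mdchoice {S S' A : Type} (C₁ C₂ : S → Outcome S' A) : S → Outcome S' A :=
  fun σ => dchoiceO (C₁ σ) (C₂ σ)


theorem Outcome.sat_mono {S A : Type} (φ : Outcome S A) {Q Q' : S → A → Prop}
    (h : ∀ σ a, Q σ a → Q' σ a) (hs : φ.sat Q) : φ.sat Q' := by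
  induction φ with
  | single σ a => exact h σ a hs
  | demonic I f ih => exact fun i => ih i (hs i)
  | angelic I f ih => obtain ⟨i, hi⟩ := hs; exact ⟨i, ih i hi⟩

theorem Outcome.sat_bind {S A S' B : Type} (φ : Outcome S A) (C : A → S → Outcome S' B)
    (Q : S' → B → Prop) : (φ.bind C).sat Q ↔ φ.sat (fun σ a => ((C a σ).sat Q)) := by
  induction φ with
  | single σ a => rfl
  | demonic I f ih => exact forall_congr' fun i => ih i
  | angelic I f ih => exact exists_congr fun i => ih i

/-- sequential composition of answer-free mutators is monotonic with
respect to coverage. -/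
theorem mthen_mono {S S' S'' : Type}
    (C₁ C₁' : S → Outcome S' Unit) (C₂ C₂' : S' → Outcome S'' Unit)
    (h₁ : mcover C₁ C₁') (h₂ : mcover C₂ C₂') :
    mcover (mthen C₁ C₂) (mthen C₁' C₂') := by
  intro σ Q h
  rw [mthen, Outcome.sat_bind] at h ⊢
  exact h₁ σ _ ((C₁ σ).sat_mono (fun τ _ => h₂ τ Q) h)
end

section
/- Satisfaction of sequential composition (answer-free case): for every outcome φ over S, mutator C : S → Outcomes(S'), and postcondition Q on S', (φ; C) {Q} holds if and only if φ {σ | C(σ) {Q}} holds. -/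
/-- satisfaction of the answer-free sequential composition `φ; C`. -/
theorem oseq_sat {S S' : Type} (φ : Outcome S Unit) (C : S → Outcome S' Unit)
    (Q : S' → Prop) :
    (oseq φ C).sat (fun σ' _ => Q σ') ↔
      φ.sat (fun σ _ => (C σ).sat (fun σ' _ => Q σ')) := by
  induction φ with
  | single σ a => rfl
  | demonic I f ih => exact forall_congr' ih
  | angelic I f ih => exact exists_congr ih
end
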